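/- Let V be a finite-dimensional real vector space, Λ a lattice in V, and let P and Q be integers greater than 1 that are multiplicatively independent. Let f : V → ℝ be a discretely supported function such that f_P(x) = f(Px) − f(x) and f_Q(x) = f(Qx) − f(x) are both Λ-periodic. Then the image of the support of f under the quotient map V → V/Λ is a finite set. -/

import Mathlib

/-
Write `π : V → V/Λ`. Dividing a nonzero support point by `P` as long as it stays in the
(locally finite) support, and using periodicity of `f_P` to move the last point to a short
representative of its coset, shows that `π(supp f) ⊆ {0} ∪ {P^k g | k ∈ ℕ, g ∈ W}` for a finite
`W`. Dually, periodicity of `f_{Q^c}` shows that for all but finitely many cosets `t` of the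
support (those whose short representative lies outside the support) every `Q^c t` is again a
coset of the support. Torsion cosets of the support are finitely many, so if `π(supp f)` were
infinite some non-torsion `t` would have all `Q^c t` of the form `P^k g`; by pigeonhole two
`c ≠ c'` share `g`, giving `P^a Q^c = P^b Q^{c'}`, contradicting multiplicative independence.
-/

open Filter Function

/-- The additive subgroup `Λ` is a lattice in the finite-dimensional real vector space `V`:
it is the `ℤ`-span of an `ℝ`-basis of `V`. -/
def IsLattice (V : Type*) [NormedAddCommGroup V] [NormedSpace ℝ V]
    [FiniteDimensional ℝ V] (Λ : AddSubgroup V) : Prop :=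
  ∃ b : Module.Basis (Fin (Module.finrank ℝ V)) ℝ V,
    (Λ : Set V) = (Submodule.span ℤ (Set.range b) : Submodule ℤ V)

/-- `f` is discretely supported: its support has no accumulation points in `V`. -/
def DiscretelySupported {V : Type*} [NormedAddCommGroup V] {α : Type*} [Zero α]
    (f : V → α) : Prop :=
  ∀ x : V, ¬ AccPt x (𝓟 (Function.support f))

/-- `f` is `Λ`-periodic. -/
def IsPeriodic {V : Type*} [AddCommGroup V] {α : Type*} (Λ : Set V) (f : V → α) : Prop :=
  ∀ x : V, ∀ l ∈ Λ, f (x + l) = f x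

/-- `P` and `Q` are multiplicatively independent: `P ^ a = Q ^ b` with integer exponents
`a, b` implies `a = b = 0`. -/
def MultIndep (P Q : ℤ) : Prop :=
  ∀ a b : ℤ, (P : ℚ) ^ a = (Q : ℚ) ^ b → a = 0 ∧ b = 0

open Metric

theorem MultIndep.eq_of_pow_mul_pow_eq {P Q : ℤ} (hPQ : MultIndep P Q) (hP : P ≠ 0)
    (hQ : Q ≠ 0) {a b c d : ℕ} (h : P ^ a * Q ^ b = P ^ c * Q ^ d) : a = c ∧ b = d := by
  have hP' : (P : ℚ) ≠ 0 := by exact_mod_cast hP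
  have hQ' : (Q : ℚ) ≠ 0 := by exact_mod_cast hQ
  have h' : (P : ℚ) ^ ((a : ℤ) - c) = (Q : ℚ) ^ ((d : ℤ) - b) := by
    rw [zpow_sub₀ hP', zpow_sub₀ hQ', div_eq_div_iff (zpow_ne_zero _ hP') (zpow_ne_zero _ hQ')]
    simp only [zpow_natCast]
    rw [mul_comm ((Q : ℚ) ^ d)]
    exact_mod_cast h
  obtain ⟨hac, hbd⟩ := hPQ _ _ h'
  omega

theorem MultIndep.exists_pow_smul_notMem {G : Type*} [AddCommGroup G] {P Q : ℤ}
    (hPQ : MultIndep P Q) (hP : P ≠ 0) (hQ : Q ≠ 0) {W : Set G} (hW : W.Finite) {t : G}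
    (ht : ¬IsOfFinAddOrder t) : ∃ c : ℕ, Q ^ c • t ∉ insert 0 {P ^ k • g | (k : ℕ) (g ∈ W)} := by
  have hinj := injective_zsmul_iff_not_isOfFinAddOrder.2 ht
  by_contra! hmem
  have hcover : ∀ c : ℕ, ∃ g ∈ W, ∃ k : ℕ, Q ^ c • t = P ^ k • g := fun c => by
    rcases hmem c with h0 | h
    · exact absurd (hinj (h0.trans (zero_smul ℤ t).symm)) (pow_ne_zero c hQ)
    · obtain ⟨k, g, hg, hgt⟩ := h
      exact ⟨g, hg, k, hgt.symm⟩
  choose g hg k hk using hcover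
  have := hW.to_subtype
  obtain ⟨c, c', hne, heq⟩ := Finite.exists_ne_map_eq_of_infinite fun c => (⟨g c, hg c⟩ : W)
  have heq : g c = g c' := congrArg Subtype.val heq
  have hmul : (P ^ k c' * Q ^ c) • t = (P ^ k c * Q ^ c') • t := by
    rw [mul_smul, mul_smul, hk, hk, heq, smul_comm]
  exact hne (hPQ.eq_of_pow_mul_pow_eq hP hQ (hinj hmul)).2

theorem finite_isOfFinAddOrder_inter_pow_smul {G : Type*} [AddCommGroup G]
    (htors : ∀ {n : ℤ}, n ≠ 0 → {t : G | n • t = 0}.Finite) {P : ℤ} (hP : P ≠ 0)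
    {W : Set G} (hW : W.Finite) :
    ({t | IsOfFinAddOrder t} ∩ {P ^ k • g | (k : ℕ) (g ∈ W)}).Finite := by
  refine ((hW.sep IsOfFinAddOrder).biUnion fun g hg =>
    htors (n := addOrderOf g) (by exact_mod_cast hg.2.addOrderOf_pos.ne')).subset ?_
  rintro t ⟨ht, htW⟩
  obtain ⟨k, g, hg, rfl⟩ := htW
  have hg_tors : IsOfFinAddOrder g := by
    obtain ⟨n, hn, hnt⟩ := isOfFinAddOrder_iff_zsmul_eq_zero.1 ht
    rw [← mul_smul] at hnt
    exact isOfFinAddOrder_iff_zsmul_eq_zero.2 ⟨_, mul_ne_zero hn (pow_ne_zero k hP), hnt⟩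
  refine Set.mem_biUnion ⟨hg, hg_tors⟩ ?_
  change ((addOrderOf g : ℕ) : ℤ) • P ^ k • g = 0
  rw [smul_comm, natCast_zsmul, addOrderOf_nsmul_eq_zero, smul_zero]

theorem DiscretelySupported.finite_support_inter {V α : Type*} [NormedAddCommGroup V]
    [Zero α] {f : V → α} (hf : DiscretelySupported f) {K : Set V} (hK : IsCompact K) :
    (support f ∩ K).Finite := by
  by_contra hinf
  obtain ⟨x, -, hx⟩ := Set.Infinite.exists_accPt_of_subset_isCompact hinf hK
    Set.inter_subset_right
  exact hf x (hx.mono (principal_mono.2 Set.inter_subset_left))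

theorem IsPeriodic.pow_smul_sub {V α : Type*} [AddCommGroup V] [Module ℝ V] [AddCommGroup α]
    {Λ : AddSubgroup V} {f : V → α} {Q : ℤ}
    (hfQ : IsPeriodic (Λ : Set V) fun x => f ((Q : ℝ) • x) - f x) (n : ℕ) :
    IsPeriodic (Λ : Set V) fun x => f ((Q : ℝ) ^ n • x) - f x := by
  induction n with
  | zero => simp [IsPeriodic]
  | succ n ih =>
    intro x l hl
    have hQl : (Q : ℝ) ^ n • l ∈ Λ := by
      rw [← Int.cast_pow, Int.cast_smul_eq_zsmul]
      exact Λ.zsmul_mem hl _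
    have hstep := hfQ ((Q : ℝ) ^ n • x) _ hQl
    have hih : f ((Q : ℝ) ^ n • (x + l)) - f (x + l) = f ((Q : ℝ) ^ n • x) - f x := ih x l hl
    simp only [← smul_add] at hstep
    simp only [pow_succ', mul_smul]
    rw [← sub_add_sub_cancel _ (f ((Q : ℝ) ^ n • (x + l))), hstep, hih, sub_add_sub_cancel]

theorem QuotientAddGroup.mk_intCast_smul {R V : Type*} [Ring R] [AddCommGroup V] [Module R V]
    (Λ : AddSubgroup V) (n : ℤ) (x : V) : (((n : R) • x : V) : V ⧸ Λ) = n • (x : V ⧸ Λ) := by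
  rw [Int.cast_smul_eq_zsmul, QuotientAddGroup.mk_zsmul]

theorem exists_eq_pow_smul_of_inv_smul_notMem {V : Type*} [NormedAddCommGroup V]
    [NormedSpace ℝ V] {S : Set V} (hS : ∀ ρ, (S ∩ closedBall 0 ρ).Finite) {c : ℝ} (hc : 1 < c)
    {x : V} (hx : x ∈ S) (hx0 : x ≠ 0) : ∃ k : ℕ, ∃ z ∈ S, c⁻¹ • z ∉ S ∧ x = c ^ k • z := by
  set A := {k : ℕ | (c ^ k)⁻¹ • x ∈ S}
  have hinj : Injective fun k : ℕ => (c ^ k)⁻¹ • x := fun k m hkm =>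
    pow_right_injective₀ (by positivity) hc.ne' (inv_injective (smul_left_injective ℝ hx0 hkm))
  have hA : A.Finite := (hS ‖x‖).preimage hinj.injOn |>.subset fun k hk => by
    refine ⟨hk, ?_⟩
    rw [mem_closedBall_zero_iff, norm_smul, norm_inv, norm_pow, Real.norm_of_nonneg (by positivity)]
    exact mul_le_of_le_one_left (norm_nonneg x) (inv_le_one_of_one_le₀ (one_le_pow₀ hc.le))
  obtain ⟨k, hk, hk1⟩ : ∃ k ∈ A, k + 1 ∉ A := by
    by_contra! hsucc
    have hall : ∀ k, k ∈ A := fun k => Nat.rec (by simpa [A] using hx) hsucc k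
    exact Set.infinite_univ (hA.subset fun k _ => hall k)
  refine ⟨k, _, hk, ?_, (smul_inv_smul₀ (by positivity) x).symm⟩
  rwa [smul_smul, ← mul_inv, ← pow_succ']

section Lattice

variable {V : Type*} [NormedAddCommGroup V] [NormedSpace ℝ V] [FiniteDimensional ℝ V]
  {Λ : AddSubgroup V}

theorem IsLattice.exists_mk_eq_norm_le (hΛ : IsLattice V Λ) :
    ∃ R : ℝ, ∀ t : V ⧸ Λ, ∃ x : V, (x : V ⧸ Λ) = t ∧ ‖x‖ ≤ R := by
  obtain ⟨b, hb⟩ := hΛ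
  refine ⟨∑ i, ‖b i‖, fun t => ?_⟩
  induction t using QuotientAddGroup.induction_on with | H y =>
  refine ⟨ZSpan.fract b y, QuotientAddGroup.eq_iff_sub_mem.2 ?_, ZSpan.norm_fract_le b y⟩
  rw [ZSpan.fract_apply, sub_sub_cancel_left, ← AddSubgroup.mem_carrier]
  change _ ∈ (Λ : Set V)
  rw [hb]
  exact neg_mem (ZSpan.floor b y).2

theorem IsLattice.finite_inter_closedBall (hΛ : IsLattice V Λ) (ρ : ℝ) :
    ((Λ : Set V) ∩ closedBall 0 ρ).Finite := by
  obtain ⟨b, hb⟩ := hΛ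
  rw [hb, Set.inter_comm]
  exact ZSpan.setFinite_inter b isBounded_closedBall

theorem IsLattice.finite_setOf_zsmul_eq_zero (hΛ : IsLattice V Λ) {n : ℤ} (hn : n ≠ 0) :
    {t : V ⧸ Λ | n • t = 0}.Finite := by
  obtain ⟨R, hR⟩ := hΛ.exists_mk_eq_norm_le
  have hn' : (n : ℝ) ≠ 0 := by exact_mod_cast hn
  have hfin : {x : V | ‖x‖ ≤ R ∧ (n : ℝ) • x ∈ Λ}.Finite :=
    (hΛ.finite_inter_closedBall (|(n : ℝ)| * R)).preimage (smul_right_injective V hn').injOn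
      |>.subset fun x ⟨hx, hxΛ⟩ => ⟨hxΛ, by
        rw [mem_closedBall_zero_iff, norm_smul, Real.norm_eq_abs]
        gcongr⟩
  refine (hfin.image (↑)).subset fun t ht => ?_
  obtain ⟨x, rfl, hx⟩ := hR t
  refine ⟨x, ⟨hx, (QuotientAddGroup.eq_zero_iff _).1 ?_⟩, rfl⟩
  rwa [QuotientAddGroup.mk_intCast_smul]

end Lattice

section Support

variable {V : Type*} [NormedAddCommGroup V] [NormedSpace ℝ V] {Λ : AddSubgroup V} {f : V → ℝ}

theorem mk_mem_of_inv_smul_notMem_support {P : ℤ} (hP : 0 < P)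
    (hfP : IsPeriodic (Λ : Set V) fun x => f ((P : ℝ) • x) - f x) {R : ℝ}
    (hR : ∀ t : V ⧸ Λ, ∃ x : V, (x : V ⧸ Λ) = t ∧ ‖x‖ ≤ R) {y : V} (hy : y ∈ support f)
    (hy' : (P : ℝ)⁻¹ • y ∉ support f) :
    (y : V ⧸ Λ) ∈ (↑) '' (support f ∩ closedBall 0 (P * R)) ∪
      (P • ·) '' ((↑) '' (support f ∩ closedBall 0 R)) := by
  have hP' : (0 : ℝ) < P := by exact_mod_cast hP
  set x := (P : ℝ)⁻¹ • y
  obtain ⟨u, hu, hu_norm⟩ := hR x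
  have hux : x + (u - x) = u := add_sub_cancel x u
  have hPx : (P : ℝ) • x = y := smul_inv_smul₀ hP'.ne' y
  -- periodicity of `f_P` moves `x`, where `f` vanishes, to the short representative `u`
  have hdiff : f ((P : ℝ) • u) - f u = f y := by
    have := hfP x (u - x) (QuotientAddGroup.eq_iff_sub_mem.1 hu)
    simpa only [hux, hPx, notMem_support.1 hy', sub_zero] using this
  have hmk : (y : V ⧸ Λ) = P • (u : V ⧸ Λ) := by
    rw [← hPx, QuotientAddGroup.mk_intCast_smul, hu]
  by_cases hu0 : f u = 0
  · refine Or.inl ⟨(P : ℝ) • u, ⟨?_, ?_⟩, by rw [QuotientAddGroup.mk_intCast_smul, hmk]⟩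
    · rw [hu0, sub_zero] at hdiff
      rwa [mem_support, hdiff]
    · rw [mem_closedBall_zero_iff, norm_smul, Real.norm_of_nonneg hP'.le]
      gcongr
  · exact Or.inr ⟨u, ⟨u, ⟨hu0, mem_closedBall_zero_iff.2 hu_norm⟩, rfl⟩, hmk.symm⟩

variable [FiniteDimensional ℝ V]

theorem exists_finite_image_support_subset_pow_smul (hΛ : IsLattice V Λ) {P : ℤ} (hP : 1 < P)
    (hf : DiscretelySupported f) (hfP : IsPeriodic (Λ : Set V) fun x => f ((P : ℝ) • x) - f x) :
    ∃ W : Set (V ⧸ Λ), W.Finite ∧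
      (↑) '' support f ⊆ insert 0 {P ^ k • g | (k : ℕ) (g ∈ W)} := by
  obtain ⟨R, hR⟩ := hΛ.exists_mk_eq_norm_le
  have hfin : ∀ ρ, (support f ∩ closedBall 0 ρ).Finite := fun ρ =>
    hf.finite_support_inter (isCompact_closedBall 0 ρ)
  refine ⟨(↑) '' (support f ∩ closedBall 0 (P * R)) ∪
    (P • ·) '' ((↑) '' (support f ∩ closedBall 0 R)),
    ((hfin _).image _).union (((hfin _).image _).image _), ?_⟩
  rintro _ ⟨x, hx, rfl⟩
  rcases eq_or_ne x 0 with rfl | hx0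
  · exact Or.inl (QuotientAddGroup.mk_zero _)
  obtain ⟨k, z, hz, hz', rfl⟩ :=
    exists_eq_pow_smul_of_inv_smul_notMem hfin (c := P) (by exact_mod_cast hP) hx hx0
  refine Or.inr ⟨k, _, mk_mem_of_inv_smul_notMem_support (by omega) hfP hR hz hz', ?_⟩
  rw [← Int.cast_pow, QuotientAddGroup.mk_intCast_smul]

theorem exists_finite_forall_pow_smul_mem_image_support (hΛ : IsLattice V Λ) {Q : ℤ}
    (hf : DiscretelySupported f) (hfQ : IsPeriodic (Λ : Set V) fun x => f ((Q : ℝ) • x) - f x) :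
    ∃ F : Set (V ⧸ Λ), F.Finite ∧ ∀ s ∈ support f, (s : V ⧸ Λ) ∉ F →
      ∀ c : ℕ, Q ^ c • (s : V ⧸ Λ) ∈ (↑) '' support f := by
  obtain ⟨R, hR⟩ := hΛ.exists_mk_eq_norm_le
  choose r hr_mk hr_norm using hR
  refine ⟨r ⁻¹' support f, (hf.finite_support_inter (isCompact_closedBall 0 R)).preimage
    (LeftInverse.injective hr_mk).injOn |>.subset fun t ht =>
      ⟨ht, mem_closedBall_zero_iff.2 (hr_norm t)⟩, ?_⟩
  intro s hs hsF c
  -- `f_{Q^c}` takes the same value at `s` and at the representative `r s`, where `f` vanishes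
  have hdiff := hfQ.pow_smul_sub c (r s) (s - r s)
    (QuotientAddGroup.eq_iff_sub_mem.1 (hr_mk s).symm)
  simp only [add_sub_cancel, notMem_support.1 hsF, sub_zero] at hdiff
  by_cases hrs : f ((Q : ℝ) ^ c • r s) = 0
  · refine ⟨(Q : ℝ) ^ c • s, ?_, by rw [← Int.cast_pow, QuotientAddGroup.mk_intCast_smul]⟩
    rw [hrs] at hdiff
    rwa [mem_support, sub_eq_zero.1 hdiff]
  · refine ⟨(Q : ℝ) ^ c • r s, hrs, ?_⟩
    rw [← Int.cast_pow, QuotientAddGroup.mk_intCast_smul, hr_mk]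

end Support

/-- **Lemma on supports.** If `P, Q > 1` are multiplicatively independent, `f` is
discretely supported and both `f_P` and `f_Q` are `Λ`-periodic, then the image of the
support of `f` in `V/Λ` is finite. -/
theorem support_image_finite
    (V : Type*) [NormedAddCommGroup V] [NormedSpace ℝ V] [FiniteDimensional ℝ V]
    (Λ : AddSubgroup V) (hΛ : IsLattice V Λ)
    (P Q : ℤ) (hP : 1 < P) (hQ : 1 < Q) (hPQ : MultIndep P Q)
    (f : V → ℝ) (hf : DiscretelySupported f)
    (hfP : IsPeriodic (Λ : Set V) (fun x => f ((P : ℝ) • x) - f x))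
    (hfQ : IsPeriodic (Λ : Set V) (fun x => f ((Q : ℝ) • x) - f x)) :
    Set.Finite ((QuotientAddGroup.mk : V → V ⧸ Λ) '' Function.support f) := by
  obtain ⟨W, hW, hsupp⟩ := exists_finite_image_support_subset_pow_smul hΛ hP hf hfP
  obtain ⟨F, hF, hQsupp⟩ := exists_finite_forall_pow_smul_mem_image_support hΛ hf hfQ
  have hP0 : P ≠ 0 := by omega
  have hQ0 : Q ≠ 0 := by omega
  have htors := finite_isOfFinAddOrder_inter_pow_smul hΛ.finite_setOf_zsmul_eq_zero hP0 hW
  by_contra hinf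
  obtain ⟨_, ⟨s, hs, rfl⟩, hs'⟩ := (Set.Infinite.sdiff hinf ((htors.insert 0).union hF)).nonempty
  simp only [Set.mem_union, Set.mem_insert_iff, not_or] at hs'
  obtain ⟨⟨hs0, hs_tors⟩, hsF⟩ := hs'
  have hs_free : ¬IsOfFinAddOrder (s : V ⧸ Λ) := fun h =>
    (hsupp ⟨s, hs, rfl⟩).elim hs0 fun hmem => hs_tors ⟨h, hmem⟩
  obtain ⟨c, hc⟩ := hPQ.exists_pow_smul_notMem hP0 hQ0 hW hs_free
  exact hc (hsupp (hQsupp s hs hsF c))
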